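/- arXiv:2105.01086 — 4 statements merged into one kernel-verified Lean document; each statement's English description precedes it below -/
import Mathlib

section
/- In the Racah algebra R(n), for every a with 1 ≤ a ≤ n and all indices 1 ≤ i < j < k < ℓ ≤ n, the relation P_{ai} F_{jkℓ} − P_{aj} F_{ikℓ} + P_{ak} F_{ijℓ} − P_{aℓ} F_{ijk} = 0 holds. -/
/-- Generators of the Racah algebra `R(n)`. -/
inductive RacahGen (n : ℕ) : Type
  | P : Fin n → Fin n → RacahGen n
  | F : Fin n → Fin n → Fin n → RacahGen n

namespace Racah

variable (n : ℕ)

/-- The free `ℂ`-algebra on the generators. -/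
abbrev FA (n : ℕ) := FreeAlgebra ℂ (RacahGen n)

noncomputable def p (i j : Fin n) : FA n := FreeAlgebra.ι ℂ (RacahGen.P i j)
noncomputable def f (i j k : Fin n) : FA n := FreeAlgebra.ι ℂ (RacahGen.F i j k)

/-- Defining relations of the Racah algebra `R(n)`, including the index
symmetry conventions `P_{ij} = P_{ji}` and `F_{ijk} = −F_{jik} = F_{jki}`. -/
inductive Rel : FA n → FA n → Prop
  | Psymm (i j : Fin n) : Rel (p n i j) (p n j i)
  | Fswap (i j k : Fin n) : Rel (f n i j k) (-f n j i k)
  | Fcycle (i j k : Fin n) : Rel (f n i j k) (f n j k i)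
  | PiiCentral (i : Fin n) (g : RacahGen n) :
      Rel (p n i i * FreeAlgebra.ι ℂ g) (FreeAlgebra.ι ℂ g * p n i i)
  | PPcomm (i j k l : Fin n) (hij : i ≠ j) (hik : i ≠ k) (hil : i ≠ l)
      (hjk : j ≠ k) (hjl : j ≠ l) (hkl : k ≠ l) :
      Rel (p n i j * p n k l) (p n k l * p n i j)
  | PP (i j k : Fin n) (hij : i ≠ j) (hik : i ≠ k) (hjk : j ≠ k) :
      Rel (p n i j * p n j k - p n j k * p n i j) (2 * f n i j k)
  | PF (i j k : Fin n) (hij : i ≠ j) (hik : i ≠ k) (hjk : j ≠ k) :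
      Rel (p n j k * f n i j k - f n i j k * p n j k)
          (p n i k * (p n j k + p n j j) - (p n j k + p n k k) * p n i j)
  | PF2 (i j k l : Fin n) (hij : i ≠ j) (hik : i ≠ k) (hil : i ≠ l)
      (hjk : j ≠ k) (hjl : j ≠ l) (hkl : k ≠ l) :
      Rel (p n k l * f n i j k - f n i j k * p n k l)
          (p n i k * p n j l - p n i l * p n j k)
  | FF (i j k l : Fin n) (hij : i ≠ j) (hik : i ≠ k) (hil : i ≠ l)
      (hjk : j ≠ k) (hjl : j ≠ l) (hkl : k ≠ l) :
      Rel (f n i j k * f n j k l - f n j k l * f n i j k)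
          (-(f n i j l + f n i k l) * p n j k)
  | FF2 (i j k l m : Fin n) (hij : i ≠ j) (hik : i ≠ k) (hil : i ≠ l) (him : i ≠ m)
      (hjk : j ≠ k) (hjl : j ≠ l) (hjm : j ≠ m) (hkl : k ≠ l) (hkm : k ≠ m)
      (hlm : l ≠ m) :
      Rel (f n i j k * f n k l m - f n k l m * f n i j k)
          (f n i l m * p n j k - f n j l m * p n i k)

/-- The Racah algebra `R(n)`: the quotient of the free algebra by the two-sided
ideal generated by the defining relations. -/
abbrev R (n : ℕ) := RingQuot (Rel n)

/-- The generator `P_{ij}` of `R(n)`. -/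
noncomputable def P (i j : Fin n) : R n := RingQuot.mkAlgHom ℂ (Rel n) (p n i j)

/-- The generator `F_{ijk}` of `R(n)`. -/
noncomputable def F (i j k : Fin n) : R n := RingQuot.mkAlgHom ℂ (Rel n) (f n i j k)

end Racah

/-!
Write `Φ(a; i, j, k, l)` for the left-hand side (`Racah.alternatingPF`). It is alternating in
`i, j, k, l`, so only `a ∉ {i, j, k, l}` and `a = i` need an argument, and both come from applying
a derivation `ad P` to a defining relation and expanding by the Jacobi identity.

For `a ∉ {i, j, k, l}`, applying `ad P_{ij}` to
`[P_{kl}, F_{jak}] = P_{jk} P_{al} − P_{jl} P_{ak}` gives `2 Φ = 0` directly, since `P_{ij}`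
commutes with `P_{kl}`.

For `Φ(a; a, b, c, d)`, applying `ad P_{cd}` to the relation for `[P_{ac}, F_{bac}]` gives this
expression with every `F` written to the left of its `P`. Moving the `F`s back costs the commutators
`[P_{ab}, F_{acd}]`, `[P_{ac}, F_{abd}]`, `[P_{ad}, F_{abc}]`, whose sum vanishes.
-/

theorem isUnit_two_of_algebra {K A : Type*} [Field K] [NeZero (2 : K)] [Ring A] [Algebra K A] :
    IsUnit (2 : A) := by
  simpa only [map_ofNat] using (Ne.isUnit (two_ne_zero (α := K))).map (algebraMap K A)

attribute [local instance] LieRing.ofAssociativeRing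

theorem Ring.lie_mul {A : Type*} [Ring A] (x y z : A) :
    ⁅x, y * z⁆ = ⁅x, y⁆ * z + y * ⁅x, z⁆ := by
  simp only [lie_def, sub_mul, mul_sub, mul_assoc]; abel

namespace Racah

variable {n : ℕ}

/- `FreeAlgebra`'s `Ring` instance is `Algebra.semiringToRing`, so `Mul (R n)` and `Neg (R n)` are
built from structures on `FA n` that agree only up to unfolding, and the generic `HasDistribNeg`
instance is not found: without this one, `mul_neg`, `neg_mul` and `noncomm_ring` fail on `R n`. -/
instance instHasDistribNeg (n : ℕ) : HasDistribNeg (R n) where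
  neg_mul := neg_mul
  mul_neg := mul_neg

theorem P_symm (i j : Fin n) : P n i j = P n j i := RingQuot.mkAlgHom_rel ℂ (Rel.Psymm i j)

theorem F_swap₁₂ (i j k : Fin n) : F n j i k = -F n i j k := by
  rw [F, F, RingQuot.mkAlgHom_rel ℂ (Rel.Fswap i j k), map_neg,
    neg_neg]

theorem F_cycle (i j k : Fin n) : F n j k i = F n i j k :=
  (RingQuot.mkAlgHom_rel ℂ (Rel.Fcycle i j k)).symm

theorem F_swap₂₃ (i j k : Fin n) : F n i k j = -F n i j k := by
  rw [← F_cycle, F_swap₁₂, F_cycle]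

theorem commute_P_self (i : Fin n) (x : R n) : Commute (P n i i) x := by
  obtain ⟨y, rfl⟩ := RingQuot.mkAlgHom_surjective ℂ (Rel n) x
  induction y using FreeAlgebra.induction with
  | grade0 r => rw [AlgHom.commutes]; exact Algebra.commute_algebraMap_right r _
  | grade1 g =>
    simpa only [commute_iff_eq, P, map_mul] using RingQuot.mkAlgHom_rel ℂ (Rel.PiiCentral i g)
  | mul a b ha hb => rw [map_mul]; exact ha.mul_right hb
  | add a b ha hb => rw [map_add]; exact ha.add_right hb

theorem commute_P_P {i j k l : Fin n} (hik : i ≠ k) (hil : i ≠ l) (hjk : j ≠ k) (hjl : j ≠ l) :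
    Commute (P n i j) (P n k l) := by
  obtain rfl | hij := eq_or_ne i j
  · exact commute_P_self i _
  obtain rfl | hkl := eq_or_ne k l
  · exact (commute_P_self k _).symm
  simpa only [commute_iff_eq, P, map_mul] using
    RingQuot.mkAlgHom_rel ℂ (Rel.PPcomm i j k l hij hik hil hjk hjl hkl)

theorem lie_P_P {i j k : Fin n} (hij : i ≠ j) (hik : i ≠ k) (hjk : j ≠ k) :
    ⁅P n i j, P n j k⁆ = 2 * F n i j k := by
  simpa only [Ring.lie_def, P, F, map_sub, map_mul, map_ofNat] using
    RingQuot.mkAlgHom_rel ℂ (Rel.PP i j k hij hik hjk)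

theorem lie_P_F_two_common {i j k : Fin n} (hij : i ≠ j) (hik : i ≠ k) (hjk : j ≠ k) :
    ⁅P n j k, F n i j k⁆ = P n i k * (P n j k + P n j j) - (P n j k + P n k k) * P n i j := by
  simpa only [Ring.lie_def, P, F, map_sub, map_mul, map_add] using
    RingQuot.mkAlgHom_rel ℂ (Rel.PF i j k hij hik hjk)

theorem lie_P_F_one_common {i j k l : Fin n} (hij : i ≠ j) (hik : i ≠ k) (hil : i ≠ l)
    (hjk : j ≠ k) (hjl : j ≠ l) (hkl : k ≠ l) :
    ⁅P n k l, F n i j k⁆ = P n i k * P n j l - P n i l * P n j k := by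
  simpa only [Ring.lie_def, P, F, map_sub, map_mul] using
    RingQuot.mkAlgHom_rel ℂ (Rel.PF2 i j k l hij hik hil hjk hjl hkl)

theorem lie_P_F_one_common' {a s u v : Fin n} (has : a ≠ s) (hau : a ≠ u) (hav : a ≠ v)
    (hsu : s ≠ u) (hsv : s ≠ v) (huv : u ≠ v) :
    ⁅P n s a, F n s u v⁆ = P n u s * P n v a - P n u a * P n v s := by
  rw [← F_cycle s u v]
  exact lie_P_F_one_common huv hsu.symm hau.symm hsv.symm hav.symm has.symm

theorem lie_F_F {i j k l : Fin n} (hij : i ≠ j) (hik : i ≠ k) (hil : i ≠ l)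
    (hjk : j ≠ k) (hjl : j ≠ l) (hkl : k ≠ l) :
    ⁅F n i j k, F n j k l⁆ = -(F n i j l + F n i k l) * P n j k := by
  simpa only [Ring.lie_def, P, F, map_sub, map_mul, map_add, map_neg] using
    RingQuot.mkAlgHom_rel ℂ (Rel.FF i j k l hij hik hil hjk hjl hkl)

variable (n) in
noncomputable def alternatingPF (a i j k l : Fin n) : R n :=
  P n a i * F n j k l - P n a j * F n i k l + P n a k * F n i j l - P n a l * F n i j k

theorem alternatingPF_swap₁₂ (a i j k l : Fin n) :
    alternatingPF n a j i k l = -alternatingPF n a i j k l := by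
  simp only [alternatingPF, F_swap₁₂ i j, mul_neg]; abel

theorem alternatingPF_swap₂₃ (a i j k l : Fin n) :
    alternatingPF n a i k j l = -alternatingPF n a i j k l := by
  simp only [alternatingPF, F_swap₁₂ j k, F_swap₂₃ i j k, mul_neg]; abel

theorem alternatingPF_swap₃₄ (a i j k l : Fin n) :
    alternatingPF n a i j l k = -alternatingPF n a i j k l := by
  simp only [alternatingPF, F_swap₂₃ _ k l, mul_neg]; abel

theorem alternatingPF_eq_zero_of_pairwise_ne {a i j k l : Fin n} (hai : a ≠ i) (haj : a ≠ j)
    (hak : a ≠ k) (hal : a ≠ l) (hij : i ≠ j) (hik : i ≠ k) (hil : i ≠ l) (hjk : j ≠ k)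
    (hjl : j ≠ l) (hkl : k ≠ l) : alternatingPF n a i j k l = 0 := by
  -- Swapping the commuting factors `P_{jk} P_{al}` first leaves each `F` to the right of its `P`.
  have hL : ⁅P n i j, ⁅P n k l, F n j a k⁆⁆
      = P n a l * (2 * F n i j k) - P n a k * (2 * F n i j l) := by
    rw [lie_P_F_one_common haj.symm hjk hjl hak hal hkl,
      (commute_P_P haj.symm hjl hak.symm hkl).eq, (commute_P_P haj.symm hjk hal.symm hkl.symm).eq,
      lie_sub, Ring.lie_mul, Ring.lie_mul, lie_P_P hij hik hjk, lie_P_P hij hil hjl,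
      (commute_P_P hai.symm hil haj.symm hjl).lie_eq,
      (commute_P_P hai.symm hik haj.symm hjk).lie_eq, zero_mul, zero_add, zero_mul, zero_add]
  have hR : ⁅P n k l, ⁅P n i j, F n j a k⁆⁆
      = P n a j * (2 * -F n i k l) - P n a i * (2 * -F n j k l) := by
    rw [P_symm i j, ← F_cycle j a k, lie_P_F_one_common hak haj hai hjk.symm hik.symm hij.symm,
      lie_sub, Ring.lie_mul, Ring.lie_mul,
      (commute_P_P hak.symm hjk.symm hal.symm hjl.symm).lie_eq,
      (commute_P_P hak.symm hik.symm hal.symm hil.symm).lie_eq, zero_mul, zero_add, zero_mul,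
      zero_add, P_symm k l, lie_P_P hkl.symm hil.symm hik.symm,
      lie_P_P hkl.symm hjl.symm hjk.symm, F_cycle i l k, F_cycle j l k, F_swap₂₃ i k l,
      F_swap₂₃ j k l]
  have jacobi := leibniz_lie (P n i j) (P n k l) (F n j a k)
  rw [hL, hR, (commute_P_P hik hil hjk hjl).lie_eq, zero_lie, zero_add] at jacobi
  refine (isUnit_two_of_algebra (K := ℂ)).mul_left_cancel ?_
  rw [mul_zero, ← sub_eq_zero_of_eq jacobi.symm, alternatingPF]
  noncomm_ring

theorem alternating_F_mul_P_self_eq_zero {a b c d : Fin n} (hab : a ≠ b) (hac : a ≠ c)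
    (had : a ≠ d) (hbc : b ≠ c) (hbd : b ≠ d) (hcd : c ≠ d) :
    F n b c d * P n a a - F n a c d * P n a b + F n a b d * P n a c
      - F n a b c * P n a d = 0 := by
  have e1 : ⁅P n c d, P n b c⁆ = 2 * -F n b c d := by
    rw [P_symm c d, P_symm b c, lie_P_P hcd.symm hbd.symm hbc.symm, F_cycle b d c,
      F_swap₂₃ b c d]
  have e2 : ⁅P n c d, P n a c⁆ = 2 * -F n a c d := by
    rw [P_symm c d, P_symm a c, lie_P_P hcd.symm had.symm hac.symm, F_cycle a d c,
      F_swap₂₃ a c d]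
  have e3 : ⁅P n a c, P n b c⁆ = 2 * -F n a b c := by
    rw [P_symm b c, lie_P_P hac hab hbc.symm, F_swap₂₃ a b c]
  have e4 : ⁅P n a c, P n a d⁆ = 2 * -F n a c d := by
    rw [P_symm a c, lie_P_P hac.symm hcd had, ← F_cycle c a d, F_swap₂₃ a c d]
  have e5 : ⁅2 * -F n a c d, F n b a c⁆ = 2 * ((F n a b d - F n b c d) * P n a c) := by
    calc ⁅2 * -F n a c d, F n b a c⁆ = 2 * ⁅F n b a c, F n a c d⁆ := by
          simp only [Ring.lie_def]; noncomm_ring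
      _ = _ := by rw [lie_F_F hab.symm hbc hbd hac had hcd, F_swap₁₂ a b d]; noncomm_ring
  have jacobi := leibniz_lie (P n c d) (P n a c) (F n b a c)
  rw [lie_P_F_two_common hab.symm hbc hac, lie_P_F_one_common hab.symm hbc hbd hac had hcd, e2,
    e5] at jacobi
  simp only [lie_sub, lie_add, Ring.lie_mul, e1, e2, e3, e4, lie_self,
    (commute_P_self a _).symm.lie_eq, (commute_P_self c _).symm.lie_eq,
    (commute_P_P hbc.symm hac.symm hbd.symm had.symm).lie_eq,
    (commute_P_P hab had hbc.symm hcd).lie_eq] at jacobi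
  refine (isUnit_two_of_algebra (K := ℂ)).mul_left_cancel ?_
  rw [mul_zero, P_symm a b, ← sub_eq_zero_of_eq jacobi.symm]
  noncomm_ring

theorem alternatingPF_self {a b c d : Fin n} (hab : a ≠ b) (hac : a ≠ c) (had : a ≠ d)
    (hbc : b ≠ c) (hbd : b ≠ d) (hcd : c ≠ d) : alternatingPF n a a b c d = 0 :=
  calc alternatingPF n a a b c d
      = ⁅P n a a, F n b c d⁆ - ⁅P n a b, F n a c d⁆ + ⁅P n a c, F n a b d⁆ - ⁅P n a d, F n a b c⁆
        + (F n b c d * P n a a - F n a c d * P n a b + F n a b d * P n a c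
          - F n a b c * P n a d) := by
        rw [alternatingPF]; simp only [Ring.lie_def]; abel
    _ = 0 := by
      rw [alternating_F_mul_P_self_eq_zero hab hac had hbc hbd hcd,
        (commute_P_self a _).lie_eq,
        lie_P_F_one_common' hab.symm hbc hbd hac had hcd,
        lie_P_F_one_common' hac.symm hbc.symm hcd hab had hbd,
        lie_P_F_one_common' had.symm hbd.symm hcd.symm hab hac hbc,
        P_symm c b, P_symm d c, P_symm d b, (commute_P_P hbc.symm hcd hab had).eq]
      abel

theorem alternatingPF_eq_zero {i j k l : Fin n} (hij : i ≠ j) (hik : i ≠ k) (hil : i ≠ l)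
    (hjk : j ≠ k) (hjl : j ≠ l) (hkl : k ≠ l) (a : Fin n) : alternatingPF n a i j k l = 0 := by
  obtain rfl | hai := eq_or_ne a i
  · exact alternatingPF_self hij hik hil hjk hjl hkl
  obtain rfl | haj := eq_or_ne a j
  · have h := alternatingPF_self hij.symm hjk hjl hik hil hkl
    rwa [alternatingPF_swap₁₂, neg_eq_zero] at h
  obtain rfl | hak := eq_or_ne a k
  · have h := alternatingPF_self hik.symm hjk.symm hkl hij hil hjl
    rwa [alternatingPF_swap₁₂, alternatingPF_swap₂₃, neg_neg] at h
  obtain rfl | hal := eq_or_ne a l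
  · have h := alternatingPF_self hil.symm hjl.symm hkl.symm hij hik hjk
    rwa [alternatingPF_swap₁₂, alternatingPF_swap₂₃, alternatingPF_swap₃₄, neg_neg,
      neg_eq_zero] at h
  exact alternatingPF_eq_zero_of_pairwise_ne hai haj hak hal hij hik hil hjk hjl hkl

end Racah

open Racah in
theorem PF_quadratic_identity_general (n : ℕ) (a i j k l : Fin n)
    (hij : i < j) (hjk : j < k) (hkl : k < l) :
    P n a i * F n j k l - P n a j * F n i k l
      + P n a k * F n i j l - P n a l * F n i j k = 0 :=
  alternatingPF_eq_zero hij.ne (hij.trans hjk).ne (hij.trans (hjk.trans hkl)).ne hjk.ne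
    (hjk.trans hkl).ne hkl.ne a

open Racah in
/-- In `R(n)`, for every `a` and all `i < j < k < ℓ`,
`P_{ai}F_{jkℓ} − P_{aj}F_{ikℓ} + P_{ak}F_{ijℓ} − P_{aℓ}F_{ijk} = 0`. -/
theorem PF_quadratic_identity (n : ℕ) (hn : 3 ≤ n) (a i j k l : Fin n)
    (hij : i < j) (hjk : j < k) (hkl : k < l) :
    P n a i * F n j k l - P n a j * F n i k l
      + P n a k * F n i j l - P n a l * F n i j k = 0 :=
  PF_quadratic_identity_general n a i j k l hij hjk hkl
end

section
/- For every integer r ≥ 0, the following identity of formal power series over ℤ holds: (1 − t²)^{3(r+1)} · Σ_{k ≥ 0} (−1)^k ã_k t^k = (1 − t)^{r+2} (1 + t)^r · Σ_{k=0}^{2r} (−1)^k a_k t^k, where ã_{2k} = C(r+k+1, k)², ã_{2k+1} = C(r+k+1, k)·C(r+k+2, k+1), a_{2k} = C(r, k)², and a_{2k+1} = C(r, k)·C(r, k+1). -/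
/-!
With `b_k = C(r+k+1, k)` one has `ã_n = b_⌊n/2⌋ b_⌈n/2⌉`, so
`Σ (-1)^n ã_n t^n = F(t²) - t G(t²)` for `F = Σ b_k² x^k` and `G = Σ b_k b_{k+1} x^k`; likewise for `a_n` with `c_k = C(r, k)`.
The classical generating function
`Σ_k C(a+k, k) C(b+k, k) x^k = Σ_n C(a, n) C(b, n) x^n / (1 - x)^(a+b+1)`
gives `F` in closed form, and by Pascal's rule `x G = F - Σ_k C(r+k, k) b_k x^k`, whose last
series is of the same kind. After multiplication by `t` the identity therefore becomes one
between polynomials, which is again Pascal's rule.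
-/

open PowerSeries Finset

theorem Nat.add_choose_eq_sum_choose_mul_choose (a n : ℕ) :
    (a + n).choose n = ∑ j ∈ range (n + 1), a.choose j * n.choose j := by
  rw [Nat.add_choose_eq, Nat.sum_antidiagonal_eq_sum_range_succ_mk]
  refine sum_congr rfl fun j hj => ?_
  rw [Nat.choose_symm (Nat.lt_succ_iff.mp (mem_range.mp hj))]

theorem Nat.add_choose_mul_choose (a n m : ℕ) :
    (a + (n + m)).choose (n + m) * (n + m).choose n =
      (a + n).choose n * (a + n + m).choose (a + n) := by
  rw [Nat.choose_mul (by omega), mul_comm ((a + n).choose n), Nat.choose_mul (by omega),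
    show a + n + m = a + (n + m) by omega, show a + (n + m) - n = a + m by omega,
    show n + m - n = m by omega, show a + n - n = a by omega, Nat.choose_symm_add]

theorem sum_choose_mul_add_choose_mul_pow_mul_pow {R : Type*} [CommSemiring R] (a b : ℕ)
    (x y : R) :
    ∑ n ∈ range (b + 1), (b.choose n * (a + n).choose n : R) * x ^ n * y ^ (b - n) =
      ∑ j ∈ range (b + 1), (a.choose j * b.choose j : R) * x ^ j * (x + y) ^ (b - j) := by
  calc _ = ∑ n ∈ range (b + 1), ∑ j ∈ range (n + 1),
        (a.choose j * b.choose j * (b - j).choose (n - j) : R) * x ^ n * y ^ (b - n) := by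
        refine sum_congr rfl fun n _ => ?_
        rw [Nat.add_choose_eq_sum_choose_mul_choose]
        push_cast
        rw [mul_sum, sum_mul, sum_mul]
        refine sum_congr rfl fun j hj => ?_
        have := Nat.choose_mul (n := b) (k := n) (s := j) (by simpa [Nat.lt_succ_iff] using hj)
        trans ((a.choose j * (b.choose n * n.choose j) : ℕ) : R) * x ^ n * y ^ (b - n)
        · push_cast; ring
        · rw [this]; push_cast; ring
    _ = ∑ j ∈ range (b + 1), ∑ i ∈ range (b - j + 1),
        (a.choose j * b.choose j * (b - j).choose i : R) * x ^ (j + i) * y ^ (b - j - i) := by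
        simp_rw [range_eq_Ico]
        rw [← sum_Ico_Ico_comm]
        refine sum_congr rfl fun j hj => ?_
        rw [sum_Ico_eq_sum_range, ← range_eq_Ico, show b + 1 - j = b - j + 1 by simp at hj; omega]
        refine sum_congr rfl fun i _ => ?_
        simp [Nat.sub_sub]
    _ = _ := by
        refine sum_congr rfl fun j _ => ?_
        rw [add_pow, mul_sum]
        refine sum_congr rfl fun i _ => ?_
        rw [pow_add]
        ring

namespace PowerSeries

theorem sum_range_C_mul_X_pow_eq_mk {R : Type*} [Semiring R] {f : ℕ → R} {N : ℕ}
    (hf : ∀ k, N ≤ k → f k = 0) :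
    ∑ k ∈ range N, C (f k) * X ^ k = mk f := by
  ext n
  simp only [map_sum, coeff_C_mul_X_pow, coeff_mk, sum_ite_eq, mem_range]
  split_ifs with h
  · rfl
  · exact (hf n (not_lt.mp h)).symm

variable {R : Type*} [CommRing R]

theorem mk_neg_one_pow_mul_eq (s : ℕ → R) :
    mk (fun k => (-1) ^ k * s k) =
      expand 2 two_ne_zero (mk fun k => s (2 * k)) -
        X * expand 2 two_ne_zero (mk fun k => s (2 * k + 1)) := by
  ext n
  obtain ⟨k, rfl | rfl⟩ := Nat.even_or_odd' n
  · have hodd : coeff (2 * k) (X * expand 2 two_ne_zero (mk fun k => s (2 * k + 1))) = 0 := by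
      rcases k with _ | k
      · exact coeff_zero_X_mul _
      · rw [show 2 * (k + 1) = 2 * k + 1 + 1 by ring, coeff_succ_X_mul,
          coeff_expand_of_not_dvd _ _ _ (by omega)]
    simp [hodd, pow_mul]
  · simp [coeff_succ_X_mul, coeff_expand, pow_succ]

theorem one_sub_X_pow_mul_mk_add_choose_mul_choose (a n : ℕ) :
    (1 - X : R⟦X⟧) ^ (a + n + 1) * mk (fun k => ((a + k).choose k * k.choose n : R)) =
      C ((a + n).choose n : R) * X ^ n := by
  have h : mk (fun k => ((a + k).choose k * k.choose n : R)) =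
      C ((a + n).choose n : R) * X ^ n * mk (fun m => ((a + n + m).choose (a + n) : R)) := by
    ext k
    rw [coeff_mk, mul_assoc, coeff_C_mul, coeff_X_pow_mul']
    split_ifs with hnk
    · obtain ⟨m, rfl⟩ := Nat.exists_eq_add_of_le hnk
      rw [coeff_mk, Nat.add_sub_cancel_left, ← Nat.cast_mul, ← Nat.cast_mul,
        Nat.add_choose_mul_choose]
    · simp [Nat.choose_eq_zero_of_lt (not_le.mp hnk)]
  rw [h, mul_comm, mul_assoc, mk_add_choose_mul_one_sub_pow_eq_one, mul_one]

theorem one_sub_X_pow_mul_mk_add_choose_mul_add_choose (a b : ℕ) :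
    (1 - X : R⟦X⟧) ^ (a + b + 1) * mk (fun k => ((a + k).choose k * (b + k).choose k : R)) =
      mk fun n => (a.choose n * b.choose n : R) := by
  have hsplit : mk (fun k => ((a + k).choose k * (b + k).choose k : R)) =
      ∑ n ∈ range (b + 1),
        C (b.choose n : R) * mk (fun k => ((a + k).choose k * k.choose n : R)) := by
    ext k
    have hv : (b + k).choose k = ∑ n ∈ range (b + 1), k.choose n * b.choose n := by
      rw [← Nat.choose_symm_add, add_comm, Nat.add_choose_eq_sum_choose_mul_choose]
    rw [coeff_mk, map_sum, hv]
    push_cast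
    rw [mul_sum]
    refine sum_congr rfl fun n _ => ?_
    rw [coeff_C_mul, coeff_mk]
    ring
  calc _ = ∑ n ∈ range (b + 1), C (b.choose n : R) * (1 - X) ^ (b - n) *
        ((1 - X) ^ (a + n + 1) * mk (fun k => ((a + k).choose k * k.choose n : R))) := by
        rw [hsplit, mul_sum]
        refine sum_congr rfl fun n hn => ?_
        rw [show a + b + 1 = b - n + (a + n + 1) by simp at hn; omega, pow_add]
        ring
    _ = ∑ n ∈ range (b + 1),
        (b.choose n * (a + n).choose n : R⟦X⟧) * X ^ n * (1 - X) ^ (b - n) := by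
        refine sum_congr rfl fun n _ => ?_
        rw [one_sub_X_pow_mul_mk_add_choose_mul_choose, map_natCast, map_natCast]
        ring
    _ = ∑ n ∈ range (b + 1), C (a.choose n * b.choose n : R) * X ^ n := by
        rw [sum_choose_mul_add_choose_mul_pow_mul_pow]
        simp
    _ = _ := sum_range_C_mul_X_pow_eq_mk fun k hk => by simp [Nat.choose_eq_zero_of_lt hk]

section

variable (r : ℕ)

theorem one_sub_X_pow_mul_mk_add_succ_choose_sq :
    (1 - X : R⟦X⟧) ^ (2 * r + 3) * mk (fun k => ((r + k + 1).choose k : R) ^ 2) =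
      mk fun n => ((r + 1).choose n : R) ^ 2 := by
  have := one_sub_X_pow_mul_mk_add_choose_mul_add_choose (R := R) (r + 1) (r + 1)
  rw [show r + 1 + (r + 1) + 1 = 2 * r + 3 by ring] at this
  simpa only [← sq, ← Nat.add_right_comm r] using this

theorem one_sub_X_pow_mul_mk_add_choose_mul_add_succ_choose :
    (1 - X : R⟦X⟧) ^ (2 * r + 2) * mk (fun k => ((r + k).choose k * (r + k + 1).choose k : R)) =
      mk fun n => (r.choose n * (r + 1).choose n : R) := by
  have := one_sub_X_pow_mul_mk_add_choose_mul_add_choose (R := R) r (r + 1)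
  rw [show r + (r + 1) + 1 = 2 * r + 2 by ring] at this
  simpa only [← Nat.add_right_comm r] using this

theorem pascal_mk_add_succ_choose_sq : (mk fun k => ((r + k + 1).choose k : R) ^ 2) =
    (mk fun k => ((r + k).choose k * (r + k + 1).choose k : R)) +
      X * mk fun k => ((r + k + 1).choose k * (r + k + 2).choose (k + 1) : R) := by
  ext (_ | m)
  · simp
  · simp [coeff_succ_X_mul, Nat.choose_succ_succ', ← add_assoc]
    ring

theorem pascal_mk_choose_mul_succ_choose : (mk fun n => (r.choose n * (r + 1).choose n : R)) =
    (mk fun n => (r.choose n : R) ^ 2) + X * mk fun n => (r.choose n * r.choose (n + 1) : R) := by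
  ext (_ | m)
  · simp
  · simp [coeff_succ_X_mul, Nat.choose_succ_succ']
    ring

theorem pascal_mk_succ_choose_sq : (mk fun n => ((r + 1).choose n : R) ^ 2) =
    (mk fun n => (r.choose n * (r + 1).choose n : R)) +
      X * ((mk fun n => (r.choose n : R) ^ 2) +
        mk fun n => (r.choose n * r.choose (n + 1) : R)) := by
  ext (_ | m)
  · simp
  · simp [coeff_succ_X_mul, Nat.choose_succ_succ']
    ring

theorem one_sub_X_sq_pow_mul_expand_sub_X_mul_expand :
    (1 - X ^ 2 : R⟦X⟧) ^ (3 * (r + 1)) *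
        (expand 2 two_ne_zero (mk fun k => ((r + k + 1).choose k : R) ^ 2) -
          X * expand 2 two_ne_zero
            (mk fun k => ((r + k + 1).choose k * (r + k + 2).choose (k + 1) : R))) =
      (1 - X) ^ (r + 2) * (1 + X) ^ r *
        (expand 2 two_ne_zero (mk fun k => (r.choose k : R) ^ 2) -
          X * expand 2 two_ne_zero (mk fun k => (r.choose k * r.choose (k + 1) : R))) := by
  set D := expand (R := R) 2 two_ne_zero
  set F := mk fun k => ((r + k + 1).choose k : R) ^ 2
  set F' := mk fun k => ((r + k).choose k * (r + k + 1).choose k : R)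
  set G := mk fun k => ((r + k + 1).choose k * (r + k + 2).choose (k + 1) : R)
  set E := mk fun k => (r.choose k : R) ^ 2
  set O := mk fun k => (r.choose k * r.choose (k + 1) : R)
  set P' := mk fun n => (r.choose n * (r + 1).choose n : R)
  have hDX : D X = X ^ 2 := expand_X 2 two_ne_zero
  have hF'G : D F = D F' + X ^ 2 * D G := by
    simpa [hDX] using congrArg D (pascal_mk_add_succ_choose_sq r)
  have hF : (1 - X ^ 2) ^ (2 * r + 3) * D F = D P' + X ^ 2 * (D E + D O) := by
    simpa [hDX, pascal_mk_succ_choose_sq] using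
      congrArg D (one_sub_X_pow_mul_mk_add_succ_choose_sq r)
  have hF' : (1 - X ^ 2) ^ (2 * r + 2) * D F' = D P' := by
    simpa [hDX] using congrArg D (one_sub_X_pow_mul_mk_add_choose_mul_add_succ_choose r)
  have hP' : D P' = D E + X ^ 2 * D O := by
    simpa [hDX] using congrArg D (pascal_mk_choose_mul_succ_choose r)
  have hfactor : (1 - X : R⟦X⟧) ^ (r + 2) * (1 + X) ^ r = (1 - X) ^ 2 * (1 - X ^ 2) ^ r := by
    rw [show (1 - X ^ 2 : R⟦X⟧) = (1 - X) * (1 + X) by ring, mul_pow]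
    ring
  -- `G` is only known through `X ^ 2 * D G`, hence the extra factor `X`
  apply X_mul_cancel
  calc X * ((1 - X ^ 2) ^ (3 * (r + 1)) * (D F - X * D G))
      = (1 - X ^ 2) ^ r * ((X - 1) * ((1 - X ^ 2) ^ (2 * r + 3) * D F) +
          (1 - X ^ 2) * ((1 - X ^ 2) ^ (2 * r + 2) * D F')) := by
        linear_combination (1 - X ^ 2) ^ r * (1 - X ^ 2) ^ (2 * r + 3) * hF'G
    _ = (1 - X ^ 2) ^ r * ((X - 1) * (D P' + X ^ 2 * (D E + D O)) + (1 - X ^ 2) * D P') := by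
        rw [hF, hF']
    _ = X * ((1 - X) ^ (r + 2) * (1 + X) ^ r * (D E - X * D O)) := by
        rw [hP', hfactor]
        ring

end

end PowerSeries

/-- For every `r ≥ 0`, in `ℤ⟦t⟧`:
`(1 − t²)^{3(r+1)} · Σ_{k≥0} (−1)^k aTil_k t^k
  = (1 − t)^{r+2} (1 + t)^r · Σ_{k=0}^{2r} (−1)^k a_k t^k`,
where `aTil_{2k} = C(r+k+1,k)²`, `aTil_{2k+1} = C(r+k+1,k)·C(r+k+2,k+1)`,
`a_{2k} = C(r,k)²`, `a_{2k+1} = C(r,k)·C(r,k+1)`. -/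
theorem hilbert_series_identity (r : ℕ)
    (aTil : ℕ → ℤ)
    (hae : ∀ k, aTil (2 * k) = ((r + k + 1).choose k : ℤ) ^ 2)
    (hao : ∀ k, aTil (2 * k + 1) = ((r + k + 1).choose k : ℤ) * ((r + k + 2).choose (k + 1) : ℤ))
    (a : ℕ → ℤ)
    (hbe : ∀ k, a (2 * k) = (r.choose k : ℤ) ^ 2)
    (hbo : ∀ k, a (2 * k + 1) = (r.choose k : ℤ) * (r.choose (k + 1) : ℤ)) :
    (1 - PowerSeries.X ^ 2) ^ (3 * (r + 1)) *
        PowerSeries.mk (fun k => (-1) ^ k * aTil k)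
      = (1 - PowerSeries.X) ^ (r + 2) * (1 + PowerSeries.X) ^ r *
          ∑ k ∈ Finset.range (2 * r + 1),
            PowerSeries.C (R := ℤ) ((-1) ^ k * a k) * PowerSeries.X ^ k := by
  have ha : ∀ k, 2 * r + 1 ≤ k → (-1) ^ k * a k = 0 := by
    intro k hk
    obtain ⟨j, rfl | rfl⟩ := Nat.even_or_odd' k
    · simp [hbe, Nat.choose_eq_zero_of_lt (show r < j by omega)]
    · simp [hbo, Nat.choose_eq_zero_of_lt (show r < j + 1 by omega)]
  rw [sum_range_C_mul_X_pow_eq_mk ha, mk_neg_one_pow_mul_eq, mk_neg_one_pow_mul_eq]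
  simp only [hae, hao, hbe, hbo]
  exact one_sub_X_sq_pow_mul_expand_sub_X_mul_expand r
end

section
/- For every integer r ≥ 0, the alternating sum Σ_{k=0}^{2r} (−1)^k a_k equals the r-th Catalan number c_r, where a_{2k} = C(r, k)² and a_{2k+1} = C(r, k)·C(r, k+1); equivalently, Σ_{k=0}^{r} C(r, k)² − Σ_{k=0}^{r−1} C(r, k)·C(r, k+1) = c_r. -/
/-!
Splitting the alternating sum by parity leaves `Σ C(r,k)² − Σ C(r,k) C(r,k+1)`. By
Vandermonde's identity the two sums are `C(2r, r)` and `C(2r, r+1)`, and their difference is the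
Catalan number because `(r+1) C(2r, r+1) = r C(2r, r)` and `(r+1) c_r = C(2r, r)`.
-/

open Finset

theorem Finset.sum_range_two_mul_add_one_neg_one_pow_mul {R : Type*} [CommRing R] (f : ℕ → R)
    (n : ℕ) :
    ∑ k ∈ range (2 * n + 1), (-1) ^ k * f k
      = ∑ j ∈ range (n + 1), f (2 * j) - ∑ j ∈ range n, f (2 * j + 1) := by
  induction n with
  | zero => simp
  | succ n ih =>
    have hodd : (-1 : R) ^ (2 * n + 1) = -1 := Odd.neg_one_pow ⟨n, rfl⟩
    have heven : (-1 : R) ^ (2 * (n + 1)) = 1 := Even.neg_one_pow ⟨n + 1, by ring⟩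
    rw [sum_range_succ, Nat.mul_succ, sum_range_succ, ih,
      sum_range_succ (fun j => f (2 * j)) (n + 1), sum_range_succ (fun j => f (2 * j + 1)) n,
      hodd, ← Nat.mul_succ, heven]
    ring

theorem Nat.sum_range_choose_mul_choose_succ (n : ℕ) :
    ∑ k ∈ range n, n.choose k * n.choose (k + 1) = (2 * n).choose (n + 1) := by
  rw [two_mul, Nat.add_choose_eq, Nat.sum_antidiagonal_succ, Nat.choose_succ_self,
    Nat.sum_antidiagonal_eq_sum_range_succ_mk, sum_range_succ, Nat.choose_succ_self]
  simp only [mul_zero, zero_mul, add_zero, zero_add]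
  refine sum_congr rfl fun k hk => ?_
  rw [Nat.choose_symm (mem_range.mp hk).le, mul_comm]

theorem catalan_eq_choose_sub_choose (n : ℕ) :
    (catalan n : ℤ) = (2 * n).choose n - (2 * n).choose (n + 1) := by
  have hcat : ((n : ℤ) + 1) * catalan n = (2 * n).choose n := by
    exact_mod_cast
      (succ_mul_catalan_eq_centralBinom n).trans (Nat.centralBinom_eq_two_mul_choose n)
  have hshift : ((2 * n).choose (n + 1) : ℤ) * (n + 1) = (2 * n).choose n * n := by
    have := Nat.choose_succ_right_eq (2 * n) n
    rw [show 2 * n - n = n by omega] at this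
    exact_mod_cast this
  refine mul_left_cancel₀ (show (n : ℤ) + 1 ≠ 0 by positivity) ?_
  linear_combination hcat + hshift

/-- For every `r ≥ 0`, `Σ_{k=0}^{2r} (−1)^k a_k = c_r`, the
`r`-th Catalan number, where `a_{2k} = C(r,k)²` and `a_{2k+1} = C(r,k)·C(r,k+1)`;
equivalently `Σ_{k=0}^{r} C(r,k)² − Σ_{k=0}^{r−1} C(r,k)·C(r,k+1) = c_r`. -/
theorem alternating_sum_eq_catalan (r : ℕ)
    (a : ℕ → ℤ)
    (hbe : ∀ k, a (2 * k) = (r.choose k : ℤ) ^ 2)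
    (hbo : ∀ k, a (2 * k + 1) = (r.choose k : ℤ) * (r.choose (k + 1) : ℤ)) :
    (∑ k ∈ Finset.range (2 * r + 1), (-1) ^ k * a k = (catalan r : ℤ)) ∧
      ((∑ k ∈ Finset.range (r + 1), (r.choose k : ℤ) ^ 2)
          - ∑ k ∈ Finset.range r, (r.choose k : ℤ) * (r.choose (k + 1) : ℤ)
        = (catalan r : ℤ)) := by
  have hdiff : (∑ k ∈ range (r + 1), (r.choose k : ℤ) ^ 2)
      - ∑ k ∈ range r, (r.choose k : ℤ) * (r.choose (k + 1) : ℤ) = catalan r := by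
    rw [catalan_eq_choose_sub_choose, ← Nat.sum_range_choose_sq,
      ← Nat.sum_range_choose_mul_choose_succ]
    push_cast
    rfl
  refine ⟨?_, hdiff⟩
  rw [sum_range_two_mul_add_one_neg_one_pow_mul]
  simpa only [hbe, hbo] using hdiff
end

section
/- For every integer r ≥ 0, in the ring of Laurent polynomials in x over ℤ[t], the constant term in x (the coefficient of x⁰) of (1 − x²)·(1 + t x²)^r·(1 + t x⁻²)^r equals the polynomial Q_r(t) = Σ_{k=0}^{2r} (−1)^k a_k t^k, where a_{2k} = C(r, k)² and a_{2k+1} = C(r, k)·C(r, k+1). -/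
/-!
Expanding both binomials, the coefficient of `x^(-2d)` in `(1 + t x²)^r (1 + t x⁻²)^r` is
`∑ i, C(r, i) C(r, i + d) t^(2i + d)`. Multiplying by `1 - x²` makes the constant term the `d = 0`
sum minus the `d = 1` sum, and these are the even and the odd part of `Q_r`.
-/

open LaurentPolynomial Finset

theorem Finset.sum_range_two_mul {M : Type*} [AddCommMonoid M] (f : ℕ → M) (n : ℕ) :
    ∑ k ∈ range (2 * n), f k = ∑ i ∈ range n, (f (2 * i) + f (2 * i + 1)) := by
  induction n with
  | zero => simp
  | succ n ih => rw [Nat.mul_succ, sum_range_succ, sum_range_succ, ih, sum_range_succ, add_assoc]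

namespace LaurentPolynomial

theorem coeff_one_sub_T_mul {R : Type*} [Ring R] (n m : ℤ) (f : R[T;T⁻¹]) :
    ((1 - T n) * f).coeff m = f.coeff m - f.coeff (m - n) := by
  rw [sub_mul, one_mul, T_mul, AddMonoidAlgebra.coeff_sub, Finsupp.sub_apply, T,
    AddMonoidAlgebra.coeff_mul_single_apply, mul_one, ← sub_eq_add_neg]

theorem coeff_C_mul_T {R : Type*} [Semiring R] (a : R) (n m : ℤ) :
    (C a * T n).coeff m = if n = m then a else 0 := by
  rw [← single_eq_C_mul_T, AddMonoidAlgebra.coeff_single, Finsupp.single_apply]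

variable {R : Type*} [CommSemiring R]

theorem one_add_C_mul_T_pow (p : R) (n : ℤ) (r : ℕ) :
    (1 + C p * T n) ^ r = ∑ i ∈ range (r + 1), C (r.choose i * p ^ i) * T (i * n) := by
  rw [add_comm, add_pow]
  refine sum_congr rfl fun i _ => ?_
  rw [one_pow, mul_one, mul_pow, ← map_pow, T_pow, map_mul, map_natCast]
  ring

theorem coeff_one_add_C_mul_T_pow_mul_neg (p : R) {n : ℤ} (hn : n ≠ 0) (r d : ℕ) :
    ((1 + C p * T n) ^ r * (1 + C p * T (-n)) ^ r).coeff (-(d * n)) =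
      ∑ i ∈ range (r + 1), (r.choose i * r.choose (i + d) : R) * p ^ (2 * i + d) := by
  simp_rw [one_add_C_mul_T_pow, sum_mul_sum, AddMonoidAlgebra.coeff_sum, Finsupp.coe_finsetSum,
    Finset.sum_apply]
  refine sum_congr rfl fun i _ => ?_
  have hterm : ∀ j : ℕ, (C (r.choose i * p ^ i) * T (i * n) *
      (C (r.choose j * p ^ j) * T (j * -n))).coeff (-(d * n)) =
      if j = i + d then (r.choose i * r.choose j : R) * p ^ (2 * i + d) else 0 := by
    intro j
    have hexp : (i * n + j * -n : ℤ) = -(d * n) ↔ j = i + d := by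
      refine ⟨fun h => ?_, fun h => by subst h; push_cast; ring⟩
      have : ((i + d : ℕ) : ℤ) * n = j * n := by push_cast; linarith
      exact_mod_cast (mul_right_cancel₀ hn this).symm
    rw [mul_mul_mul_comm, ← map_mul, ← T_add, coeff_C_mul_T, if_congr hexp rfl rfl]
    split_ifs with h
    · subst h; ring
    · rfl
  simp_rw [hterm, sum_ite_eq']
  split_ifs with h
  · rfl
  · rw [Nat.choose_eq_zero_of_lt (n := r) (k := i + d) (by simpa using h)]; simp

end LaurentPolynomial

open LaurentPolynomial in
/-- For every `r ≥ 0`, in the ring of Laurent polynomials in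
`x` over `ℤ[t]`, the constant term in `x` of `(1 − x²)(1 + tx²)^r (1 + tx⁻²)^r`
equals `Q_r(t) = Σ_{k=0}^{2r} (−1)^k a_k t^k`, where `a_{2k} = C(r,k)²` and
`a_{2k+1} = C(r,k)·C(r,k+1)`. -/
theorem constantTerm_eq_Qr (r : ℕ)
    (a : ℕ → ℤ)
    (hbe : ∀ k, a (2 * k) = (r.choose k : ℤ) ^ 2)
    (hbo : ∀ k, a (2 * k + 1) = (r.choose k : ℤ) * (r.choose (k + 1) : ℤ)) :
    (((1 - T 2) * (1 + C Polynomial.X * T 2) ^ r * (1 + C Polynomial.X * T (-2)) ^ r :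
        LaurentPolynomial (Polynomial ℤ))).coeff 0
      = ∑ k ∈ Finset.range (2 * r + 1),
          Polynomial.C ((-1) ^ k * a k) * Polynomial.X ^ k := by
  have hdiag := coeff_one_add_C_mul_T_pow_mul_neg (Polynomial.X : Polynomial ℤ) two_ne_zero r 0
  have hnext := coeff_one_add_C_mul_T_pow_mul_neg (Polynomial.X : Polynomial ℤ) two_ne_zero r 1
  simp only [CharP.cast_eq_zero, Nat.cast_one, zero_mul, one_mul, neg_zero, add_zero] at hdiag hnext
  -- `a (2r + 1) = C(r, r) C(r, r + 1) = 0` pads the sum to `range (2 (r + 1))`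
  have hlast : Polynomial.C ((-1) ^ (2 * r + 1) * a (2 * r + 1)) * Polynomial.X ^ (2 * r + 1)
      = 0 := by simp [hbo]
  rw [← add_zero (∑ k ∈ _, _), ← hlast, ← sum_range_succ,
    show 2 * r + 1 + 1 = 2 * (r + 1) by ring, sum_range_two_mul, sum_add_distrib, mul_assoc,
    coeff_one_sub_T_mul, zero_sub, hdiag, hnext, sub_eq_add_neg, ← sum_neg_distrib]
  congr 1 <;> refine sum_congr rfl fun i _ => ?_
  · simp [hbe, pow_mul, sq]
  · simp [hbo, pow_succ, pow_mul]
end
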